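/- arXiv:2303.00058 — 2 statements merged into one kernel-verified Lean document; each statement's English description precedes it below -/
import Mathlib

section
/- Suppose (A, x) lies in the full-column-rank, full-measure set U_{r,s} and T = supp q(A,x). Then the map x ↦ q(A,x) is differentiable at x, with Jacobian given row-wise by: the rows indexed by T form the matrix (A_{:,T})†, and the rows indexed outside T are zero. -/
/-!
On a neighbourhood of `x` in the nonnegative orthant the support of `q(A, ·)` is the fixed set
`T`. Each coordinate in `T` is strictly positive, so the objective is stationary in it:
`A_{:,T}ᵀ (y - A q) = 0`. Since `q` vanishes off `T`, this is the normal equation of the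
unconstrained least squares problem for the full-column-rank matrix `A_{:,T}`, whence
`q(A, y)|_T = (A_{:,T})† y`. Thus `q(A, ·)` agrees near `x` with the linear map `J`.
-/
open Matrix

/-- Moore–Penrose pseudoinverse of a full-column-rank real matrix. -/
noncomputable def pinv {m n : Type*} [Fintype m] [Fintype n] [DecidableEq n]
    (A : Matrix m n ℝ) : Matrix n m ℝ := (Aᵀ * A)⁻¹ * Aᵀ

/-- `v` is the nonnegative least squares solution for `A`, `x`. -/
def IsNNLS {r s : ℕ} (A : Matrix (Fin r) (Fin s) ℝ) (x : Fin r → ℝ) (v : Fin s → ℝ) : Prop :=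
  (∀ j, 0 ≤ v j) ∧
    ∀ w : Fin s → ℝ, (∀ j, 0 ≤ w j) →
      ∑ i, (x i - A.mulVec v i) ^ 2 ≤ ∑ i, (x i - A.mulVec w i) ^ 2

open Topology

namespace Matrix

lemma mulVec_injective_of_rank_eq_card {m n K : Type*} [Fintype n] [Field K] (A : Matrix m n K)
    (h : A.rank = Fintype.card n) : Function.Injective A.mulVec := by
  rw [mulVec_injective_iff, linearIndependent_iff_card_eq_finrank_span, Set.finrank,
    ← rank_eq_finrank_span_cols, h]

lemma mulVec_injective_submatrix_id {m n k R : Type*} [Fintype n] [Fintype k] [CommRing R]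
    {A : Matrix m n R} (hA : Function.Injective A.mulVec) {f : k → n}
    (hf : Function.Injective f) : Function.Injective (A.submatrix id f).mulVec := by
  rw [mulVec_injective_iff] at hA ⊢
  exact hA.comp f hf

lemma mulVec_eq_submatrix_mulVec_of_support_subset {m n R : Type*} [Fintype n] [CommSemiring R]
    (A : Matrix m n R) {T : Finset n} {v : n → R} (hv : ∀ j ∉ T, v j = 0) :
    A *ᵥ v = A.submatrix id (Subtype.val : T → n) *ᵥ fun j => v j := by
  ext i
  simp only [mulVec, dotProduct, submatrix_apply, id]
  rw [Finset.sum_coe_sort T fun j => A i j * v j]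
  exact (Finset.sum_subset (Finset.subset_univ T) fun j _ hj => by rw [hv j hj, mul_zero]).symm

lemma mulVec_apply_of_dite {m k R : Type*} [Fintype m] [DecidableEq k]
    [NonUnitalNonAssocSemiring R]
    {T : Finset k} {P : Matrix T m R} {J : Matrix k m R}
    (hJ : ∀ j i, J j i = if hj : j ∈ T then P ⟨j, hj⟩ i else 0) (y : m → R) (j : k) :
    (J *ᵥ y) j = if hj : j ∈ T then (P *ᵥ y) ⟨j, hj⟩ else 0 := by
  split_ifs with hj <;> simp [mulVec, dotProduct, hJ, hj]

lemma isUnit_transpose_mul_self {m n : Type*} [Fintype m] [Fintype n] [DecidableEq n]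
    {A : Matrix m n ℝ} (hA : Function.Injective A.mulVec) : IsUnit (Aᵀ * A) := by
  simpa [conjTranspose_eq_transpose_of_trivial] using (PosDef.conjTranspose_mul_self A hA).isUnit

lemma eq_pinv_mulVec_of_transpose_mulVec_sub_eq_zero {m n : Type*} [Fintype m] [Fintype n]
    [DecidableEq n] {A : Matrix m n ℝ} (hA : Function.Injective A.mulVec) {y : m → ℝ}
    {u : n → ℝ} (h : Aᵀ *ᵥ (y - A *ᵥ u) = 0) : u = pinv A *ᵥ y := by
  have hnormal : Aᵀ *ᵥ y = (Aᵀ * A) *ᵥ u := by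
    rw [← mulVec_mulVec, ← sub_eq_zero, ← mulVec_sub, h]
  have hdet : IsUnit (Aᵀ * A).det := (isUnit_iff_isUnit_det _).mp (isUnit_transpose_mul_self hA)
  rw [pinv, ← mulVec_mulVec, hnormal, mulVec_mulVec, nonsing_inv_mul _ hdet, one_mulVec]

end Matrix

lemma sum_mul_eq_zero_of_forall_sum_sq_le {ι : Type*} [Fintype ι] {e c : ι → ℝ} {δ : ℝ}
    (hδ : 0 < δ) (h : ∀ t, |t| < δ → ∑ i, e i ^ 2 ≤ ∑ i, (e i - t * c i) ^ 2) :
    ∑ i, c i * e i = 0 := by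
  have hmin : IsLocalMin (fun t => ∑ i, (e i - t * c i) ^ 2) 0 := by
    filter_upwards [Metric.ball_mem_nhds 0 hδ] with t ht
    simpa using h t (by simpa using ht)
  have hderiv : HasDerivAt (fun t => ∑ i, (e i - t * c i) ^ 2) (∑ i, -2 * (c i * e i)) 0 := by
    refine HasDerivAt.fun_sum fun i _ => ?_
    refine ((hasDerivAt_pow 2 _).comp 0
      (((hasDerivAt_id (0 : ℝ)).mul_const (c i)).const_sub (e i))).congr_deriv ?_
    simp only [id_eq, zero_mul, sub_zero]
    ring
  have := hmin.hasDerivAt_eq_zero hderiv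
  rw [← Finset.mul_sum] at this
  linarith

namespace IsNNLS

variable {r s : ℕ} {A : Matrix (Fin r) (Fin s) ℝ} {y : Fin r → ℝ} {v : Fin s → ℝ}

/-- First-order optimality in a coordinate where `v` is interior: moving along `Pi.single j 1`
stays feasible for small steps of either sign. -/
lemma transpose_mulVec_residual_eq_zero (hv : IsNNLS A y v) {j : Fin s} (hj : 0 < v j) :
    (Aᵀ *ᵥ (y - A *ᵥ v)) j = 0 := by
  show ∑ i, A i j * (y - A *ᵥ v) i = 0
  refine sum_mul_eq_zero_of_forall_sum_sq_le hj fun t ht => ?_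
  have hw : ∀ k, 0 ≤ (v + t • Pi.single j 1 : Fin s → ℝ) k := by
    intro k
    rcases eq_or_ne k j with rfl | hk
    · simp only [Pi.add_apply, Pi.smul_apply, Pi.single_eq_same, smul_eq_mul, mul_one]
      linarith [neg_abs_le t]
    · simpa [hk] using hv.1 k
  simpa [mulVec_add, mulVec_smul, mulVec_single_one, sub_add_eq_sub_sub] using hv.2 _ hw

lemma eq_mulVec_of_support (hv : IsNNLS A y v) (hA : Function.Injective A.mulVec)
    {T : Finset (Fin s)} (hT : ∀ j, j ∈ T ↔ 0 < v j) {J : Matrix (Fin s) (Fin r) ℝ}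
    (hJ : ∀ j i, J j i =
      if hj : j ∈ T then pinv (A.submatrix id (Subtype.val : T → Fin s)) ⟨j, hj⟩ i else 0) :
    v = J *ᵥ y := by
  have hvT : ∀ j ∉ T, v j = 0 := fun j hj => le_antisymm (not_lt.1 (mt (hT j).2 hj)) (hv.1 j)
  have hnormal : (A.submatrix id (Subtype.val : T → Fin s))ᵀ *ᵥ
      (y - A.submatrix id Subtype.val *ᵥ fun j : T => v j) = 0 := by
    rw [← mulVec_eq_submatrix_mulVec_of_support_subset A hvT]
    ext j
    exact hv.transpose_mulVec_residual_eq_zero ((hT j).1 j.2)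
  have hpinv := eq_pinv_mulVec_of_transpose_mulVec_sub_eq_zero
    (mulVec_injective_submatrix_id hA Subtype.val_injective) hnormal
  ext j
  rw [mulVec_apply_of_dite hJ]
  split_ifs with hj
  · exact congrFun hpinv ⟨j, hj⟩
  · exact hvT j hj

end IsNNLS

theorem nnls_deriv_in_x_general {r s : ℕ}
    (Q : (Fin r → Fin s → ℝ) → (Fin r → ℝ) → (Fin s → ℝ))
    (hQ : ∀ A x, (∀ i j, 0 ≤ A i j) → (∀ i, 0 ≤ x i) → (Matrix.of A).rank = s →
      IsNNLS (Matrix.of A) x (Q A x))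
    (A : Matrix (Fin r) (Fin s) ℝ) (hA0 : ∀ i j, 0 ≤ A i j) (hArank : A.rank = s)
    (x : Fin r → ℝ) (hx0 : ∀ i, 0 ≤ x i)
    -- `(A, x)` lies in `U_{r,s}`: the support of `q` is constant on a neighborhood
    (hU : ∃ N : Set ((Fin r → Fin s → ℝ) × (Fin r → ℝ)), IsOpen N ∧
      ((fun i j => A i j), x) ∈ N ∧
      ∀ p ∈ N, (∀ i j, 0 ≤ p.1 i j) → (∀ i, 0 ≤ p.2 i) → (Matrix.of p.1).rank = s →
        {j | 0 < Q p.1 p.2 j} = {j | 0 < Q (fun i j => A i j) x j})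
    (T : Finset (Fin s))
    (hT : T = Finset.univ.filter (fun j => 0 < Q (fun i j => A i j) x j))
    (J : Matrix (Fin s) (Fin r) ℝ)
    (hJ : ∀ j i, J j i =
      if hj : j ∈ T then
        pinv (A.submatrix id (Subtype.val : {j // j ∈ T} → Fin s)) ⟨j, hj⟩ i
      else 0) :
    HasFDerivWithinAt (fun y => Q (fun i j => A i j) y)
      (Matrix.mulVecLin J).toContinuousLinearMap {y : Fin r → ℝ | ∀ i, 0 ≤ y i} x := by
  obtain ⟨N, hN, hxN, hsupp⟩ := hU
  have hA : Function.Injective A.mulVec :=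
    A.mulVec_injective_of_rank_eq_card (by rw [hArank, Fintype.card_fin])
  have hQJ : ∀ y, ((fun i j => A i j), y) ∈ N → (∀ i, 0 ≤ y i) →
      Q (fun i j => A i j) y = J *ᵥ y := by
    intro y hyN hy0
    refine (hQ _ y hA0 hy0 hArank).eq_mulVec_of_support hA (fun j => ?_) hJ
    simpa [hT] using (Set.ext_iff.1 (hsupp (_, y) hyN hA0 hy0 hArank) j).symm
  have hV : IsOpen {y | ((fun i j => A i j), y) ∈ N} := hN.preimage (.prodMk_right _)
  have hev : ∀ᶠ y in 𝓝[{y | ∀ i, 0 ≤ y i}] x, Q (fun i j => A i j) y = J *ᵥ y := by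
    filter_upwards [self_mem_nhdsWithin, mem_nhdsWithin_of_mem_nhds (hV.mem_nhds hxN)]
      with y hy0 hyN
    exact hQJ y hyN hy0
  exact (mulVecLin J).toContinuousLinearMap.hasFDerivWithinAt.congr_of_eventuallyEq hev
    (hQJ x hxN hx0)

/-- at a locally-constant-support pair `(A, x)`, the map `x ↦ q(A,x)` is
differentiable with Jacobian having rows in `T` equal to `(A_{:,T})†` and zero rows
outside `T`. -/
theorem nnls_deriv_in_x {r s : ℕ} (hrs : s ≤ r)
    (Q : (Fin r → Fin s → ℝ) → (Fin r → ℝ) → (Fin s → ℝ))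
    (hQ : ∀ A x, (∀ i j, 0 ≤ A i j) → (∀ i, 0 ≤ x i) → (Matrix.of A).rank = s →
      IsNNLS (Matrix.of A) x (Q A x))
    (A : Matrix (Fin r) (Fin s) ℝ) (hA0 : ∀ i j, 0 ≤ A i j) (hArank : A.rank = s)
    (x : Fin r → ℝ) (hx0 : ∀ i, 0 ≤ x i)
    -- `(A, x)` lies in `U_{r,s}`: the support of `q` is constant on a neighborhood
    (hU : ∃ N : Set ((Fin r → Fin s → ℝ) × (Fin r → ℝ)), IsOpen N ∧
      ((fun i j => A i j), x) ∈ N ∧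
      ∀ p ∈ N, (∀ i j, 0 ≤ p.1 i j) → (∀ i, 0 ≤ p.2 i) → (Matrix.of p.1).rank = s →
        {j | 0 < Q p.1 p.2 j} = {j | 0 < Q (fun i j => A i j) x j})
    (T : Finset (Fin s))
    (hT : T = Finset.univ.filter (fun j => 0 < Q (fun i j => A i j) x j))
    (J : Matrix (Fin s) (Fin r) ℝ)
    (hJ : ∀ j i, J j i =
      if hj : j ∈ T then
        pinv (A.submatrix id (Subtype.val : {j // j ∈ T} → Fin s)) ⟨j, hj⟩ i
      else 0) :
    HasFDerivWithinAt (fun y => Q (fun i j => A i j) y)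
      (Matrix.mulVecLin J).toContinuousLinearMap {y : Fin r → ℝ | ∀ i, 0 ≤ y i} x :=
  nnls_deriv_in_x_general Q hQ A hA0 hArank x hx0 hU T hT J hJ
end

section
/- Let F ∈ ℝ^{r×s} have full column rank and x ∈ ℝ^r. Then the derivative of the map F ↦ F† x with respect to the i-th row of F is the s×s matrix −(F†)_{:,i} (F† x)ᵀ + ((I − F F†) x)_i · F† (F†)ᵀ. -/
/-!
At full column rank `A† = (AᵀA)⁻¹Aᵀ`, so the product rule and the derivative of matrix inversion
give `dA† = -A† dA A† + A†A†ᵀ dAᵀ (1 - AA†)`, using `A†A†ᵀ = (AᵀA)⁻¹`. Moving the `i`-th row of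
`F` by `h` is the rank-one perturbation `dF = eᵢ hᵀ`, for which this formula applied to `x` reads
`-(hᵀF†x) F†eᵢ + ((1 - FF†)x)ᵢ F†F†ᵀ h = M h`.
-/

open Matrix

open scoped Matrix.Norms.Operator

namespace Matrix

theorem isUnit_of_rank_eq_card {n K : Type*} [Fintype n] [DecidableEq n] [Field K]
    {B : Matrix n n K} (hB : B.rank = Fintype.card n) : IsUnit B := by
  rw [← mulVec_surjective_iff_isUnit, ← coe_mulVecLin, ← LinearMap.range_eq_top]
  exact Submodule.eq_top_of_finrank_eq (by rw [← rank, hB, Module.finrank_fintype_fun_eq_card])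

theorem hasFDerivAt_updateRow {m n : Type*} [Fintype m] [Fintype n] [DecidableEq m]
    (A : Matrix m n ℝ) (i : m) (a : n → ℝ) :
    HasFDerivAt (A.updateRow i)
      (vecMulVecBilin ℝ ℝ (Pi.single i 1 : m → ℝ)).toContinuousLinearMap a := by
  have hsplit : A.updateRow i = fun b => A.updateRow i 0 + vecMulVec (Pi.single i 1) b :=
    funext fun b => ext fun i' j => by
      by_cases h : i' = i <;> simp [updateRow_apply, vecMulVec_apply, h]
  rw [hsplit]
  exact (vecMulVecBilin ℝ ℝ (Pi.single i 1 : m → ℝ)).toContinuousLinearMap.hasFDerivAt.const_add _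

theorem isUnit_transpose_mul_self_of_rank_eq {m n R : Type*} [Fintype m] [Fintype n]
    [DecidableEq n] [Field R] [LinearOrder R] [IsStrictOrderedRing R] {A : Matrix m n R}
    (hA : A.rank = Fintype.card n) : IsUnit (Aᵀ * A) :=
  isUnit_of_rank_eq_card (by rw [rank_transpose_mul_self, hA])

end Matrix

section

variable {m n : Type*} [Fintype m] [Fintype n] [DecidableEq n]

theorem pinv_mul_transpose_pinv {A : Matrix m n ℝ} (hA : IsUnit (Aᵀ * A)) :
    pinv A * (pinv A)ᵀ = (Aᵀ * A)⁻¹ := by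
  have hsymm : ((Aᵀ * A)⁻¹)ᵀ = (Aᵀ * A)⁻¹ := by
    rw [transpose_nonsing_inv, transpose_mul, transpose_transpose]
  rw [pinv, transpose_mul, transpose_transpose, hsymm, ← Matrix.mul_assoc,
    Matrix.mul_assoc _ _ A, nonsing_inv_mul _ ((isUnit_iff_isUnit_det _).mp hA), Matrix.one_mul]

variable [DecidableEq m]

/-- Golub–Pereyra formula; it is the derivative of `pinv` only where `Aᵀ * A` is invertible. -/
noncomputable def pinvDeriv (A : Matrix m n ℝ) : Matrix m n ℝ →ₗ[ℝ] Matrix n m ℝ where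
  toFun E := -(pinv A * E * pinv A) + pinv A * (pinv A)ᵀ * Eᵀ * (1 - A * pinv A)
  map_add' E E' := by
    simp only [Matrix.mul_add, Matrix.add_mul, transpose_add]; abel
  map_smul' c E := by
    simp only [Matrix.mul_smul, Matrix.smul_mul, transpose_smul, RingHom.id_apply, smul_add,
      smul_neg]

theorem pinvDeriv_apply (A E : Matrix m n ℝ) :
    pinvDeriv A E = -(pinv A * E * pinv A) + pinv A * (pinv A)ᵀ * Eᵀ * (1 - A * pinv A) := rfl

theorem hasFDerivAt_pinv {A : Matrix m n ℝ} (hA : IsUnit (Aᵀ * A)) :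
    HasFDerivAt pinv (pinvDeriv A).toContinuousLinearMap A := by
  have hT : HasFDerivAt (transpose : Matrix m n ℝ → Matrix n m ℝ)
      (transposeLinearEquiv m n ℝ ℝ).toLinearMap.toContinuousLinearMap A :=
    (LinearMap.toContinuousLinearMap (transposeLinearEquiv m n ℝ ℝ).toLinearMap).hasFDerivAt
  have hGram : HasFDerivAt (fun B : Matrix m n ℝ => Bᵀ * B) _ A :=
    (mulLinearMap ℝ (A := ℝ)).toContinuousBilinearMap.hasFDerivAt_of_bilinear hT
      (hasFDerivAt_id A)
  have hInv := hasFDerivAt_ringInverse (𝕜 := ℝ) hA.unit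
  rw [hA.unit_spec] at hInv
  have hP : HasFDerivAt (fun B : Matrix m n ℝ => Ring.inverse (Bᵀ * B) * Bᵀ) _ A :=
    (mulLinearMap ℝ (A := ℝ)).toContinuousBilinearMap.hasFDerivAt_of_bilinear
      (hInv.comp (f := fun B : Matrix m n ℝ => Bᵀ * B) A hGram) hT
  have hpinv : pinv = fun B : Matrix m n ℝ => Ring.inverse (Bᵀ * B) * Bᵀ :=
    funext fun B => by rw [pinv, nonsing_inv_eq_ringInverse]
  rw [hpinv]
  refine hP.congr_fderiv (ContinuousLinearMap.ext fun E => ?_)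
  have hQ : ((hA.unit⁻¹ : (Matrix n n ℝ)ˣ) : Matrix n n ℝ) = (Aᵀ * A)⁻¹ := by
    rw [coe_units_inv, hA.unit_spec]
  -- `change`, not `simp`: these maps carry the product topology on matrices, `HasFDerivAt` the
  -- operator-norm one, and the two agree only up to unfolding.
  change Ring.inverse (Aᵀ * A) * Eᵀ + -(((hA.unit⁻¹ : (Matrix n n ℝ)ˣ) : Matrix n n ℝ) *
    (Aᵀ * E + Eᵀ * A) * ((hA.unit⁻¹ : (Matrix n n ℝ)ˣ) : Matrix n n ℝ)) * Aᵀ = pinvDeriv A E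
  rw [hQ, ← nonsing_inv_eq_ringInverse, pinvDeriv_apply, pinv_mul_transpose_pinv hA, pinv]
  simp only [Matrix.mul_add, Matrix.add_mul, Matrix.mul_sub, Matrix.mul_one, Matrix.neg_mul,
    Matrix.mul_assoc]
  abel

theorem pinvDeriv_vecMulVec_mulVec (A : Matrix m n ℝ) (u x : m → ℝ) (h : n → ℝ) :
    pinvDeriv A (vecMulVec u h) *ᵥ x =
      -(h ⬝ᵥ (pinv A *ᵥ x)) • (pinv A *ᵥ u) +
        (u ⬝ᵥ ((1 - A * pinv A) *ᵥ x)) • ((pinv A * (pinv A)ᵀ) *ᵥ h) := by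
  simp only [pinvDeriv_apply, add_mulVec, neg_mulVec, transpose_vecMulVec, ← mulVec_mulVec,
    vecMulVec_mulVec, op_smul_eq_smul, mulVec_smul, neg_smul]

end

theorem pinv_mulVec_deriv_row_general {r s : ℕ} (F : Matrix (Fin r) (Fin s) ℝ)
    (hF : F.rank = s) (x : Fin r → ℝ) (i : Fin r)
    (M : Matrix (Fin s) (Fin s) ℝ)
    (hM : ∀ β α, M β α =
      -(pinv F β i * (pinv F).mulVec x α) +
        (x i - (F * pinv F).mulVec x i) * (pinv F * (pinv F)ᵀ) β α) :
    HasFDerivAt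
      (fun a : Fin s → ℝ =>
        (pinv (Matrix.of fun i' j => if i' = i then a j else F i' j)).mulVec x)
      (Matrix.mulVecLin M).toContinuousLinearMap (F i) := by
  have hFF : IsUnit (Fᵀ * F) := isUnit_transpose_mul_self_of_rank_eq (by rwa [Fintype.card_fin])
  have hP : HasFDerivAt pinv (pinvDeriv F).toContinuousLinearMap (F.updateRow i (F i)) := by
    rw [updateRow_eq_self]; exact hasFDerivAt_pinv hFF
  have hD := ((mulVecBilin ℝ ℝ).flip x).toContinuousLinearMap.hasFDerivAt.comp (F i)
    (hP.comp (F i) (hasFDerivAt_updateRow F i (F i)))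
  have hMexpand : M = -vecMulVec ((pinv F).col i) (pinv F *ᵥ x) +
      ((1 - F * pinv F) *ᵥ x) i • (pinv F * (pinv F)ᵀ) := by
    ext β α
    simp [hM, sub_mulVec, vecMulVec_apply]
  have hrow (a : Fin s → ℝ) : (of fun i' j => if i' = i then a j else F i' j) = F.updateRow i a :=
    ext fun _ _ => updateRow_apply.symm
  refine (hD.congr_fderiv (ContinuousLinearMap.ext fun h => ?_)).congr_of_eventuallyEq
    (.of_forall fun a => congrArg (pinv · *ᵥ x) (hrow a))
  change pinvDeriv F (vecMulVec (Pi.single i 1) h) *ᵥ x = M *ᵥ h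
  rw [pinvDeriv_vecMulVec_mulVec, hMexpand, add_mulVec, neg_mulVec, vecMulVec_mulVec, smul_mulVec,
    mulVec_single_one, single_one_dotProduct, dotProduct_comm, op_smul_eq_smul, neg_smul]

/-- for `F` of full column rank, the derivative of `F ↦ F† x` with
respect to the `i`-th row of `F` is `−(F†)_{:,i}(F†x)ᵀ + ((I − FF†)x)_i · F†(F†)ᵀ`. -/
theorem pinv_mulVec_deriv_row {r s : ℕ} (hrs : s ≤ r) (F : Matrix (Fin r) (Fin s) ℝ)
    (hF : F.rank = s) (x : Fin r → ℝ) (i : Fin r)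
    (M : Matrix (Fin s) (Fin s) ℝ)
    (hM : ∀ β α, M β α =
      -(pinv F β i * (pinv F).mulVec x α) +
        (x i - (F * pinv F).mulVec x i) * (pinv F * (pinv F)ᵀ) β α) :
    HasFDerivAt
      (fun a : Fin s → ℝ =>
        (pinv (Matrix.of fun i' j => if i' = i then a j else F i' j)).mulVec x)
      (Matrix.mulVecLin M).toContinuousLinearMap (F i) :=
  pinv_mulVec_deriv_row_general F hF x i M hM
end
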